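/- A vector x̄ ∈ ℝ^p minimizes F_λ(x) = ‖Kx - y‖² + 2λ‖x‖₁ if and only if x̄ satisfies the fixed point equation x̄ = S_λ(x̄ + Kᵀ(y - Kx̄)), where S_λ is the componentwise soft-thresholding operator with threshold λ. -/

import Mathlib

/-!
Write `g = Kᵀ(y - K x̄)`. Expanding the square gives
`F(x) = F(x̄) + ‖K(x - x̄)‖² + 2(ψ(x) - ψ(x̄))` with the convex function `ψ(x) = λ‖x‖₁ - ⟨g, x⟩`.
On the segment `x̄ + s(x - x̄)` the quadratic term is `O(s²)` while convexity bounds the change of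
`ψ` by `s(ψ(x) - ψ(x̄))`, so `x̄` minimizes `F` iff it minimizes `ψ`. As `ψ` is a sum of the
one-variable functions `λ|t| - gᵢ t`, this means `gᵢ x̄ᵢ = λ|x̄ᵢ|` and `|gᵢ| ≤ λ` for every `i`,
i.e. `gᵢ ∈ λ ∂|x̄ᵢ|`, which is exactly `x̄ᵢ = S_λ(x̄ᵢ + gᵢ)`.
-/

open Finset Filter

/-- scalar soft-thresholding -/
noncomputable def softS (lam u : ℝ) : ℝ := Real.sign u * max (|u| - lam) 0

/-- componentwise soft-thresholding on ℝ^p -/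
noncomputable def softV {p : ℕ} (lam : ℝ) (u : Fin p → ℝ) : Fin p → ℝ :=
  fun i => softS lam (u i)

/-- Euclidean norm on ℝ^n -/
noncomputable def norm2 {n : ℕ} (v : Fin n → ℝ) : ℝ := Real.sqrt (∑ i, (v i) ^ 2)

/-- ℓ¹ norm on ℝ^n -/
noncomputable def normOne {n : ℕ} (v : Fin n → ℝ) : ℝ := ∑ i, |v i|

/-- the ℓ¹-penalized least-squares functional -/
noncomputable def Fl {m p : ℕ} (K : Matrix (Fin m) (Fin p) ℝ) (y : Fin m → ℝ)
    (lam : ℝ) (x : Fin p → ℝ) : ℝ :=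
  (norm2 (K.mulVec x - y)) ^ 2 + 2 * lam * normOne x

open Topology Matrix

theorem eq_softS_add_iff {lam a g : ℝ} (hlam : 0 ≤ lam) :
    a = softS lam (a + g) ↔ g * a = lam * |a| ∧ |g| ≤ lam := by
  unfold softS
  rcases lt_trichotomy (a + g) 0 with hu | hu | hu
  · rw [Real.sign_of_neg hu]; grind [abs_of_neg, abs_of_pos, abs_of_nonneg]
  · rw [hu, Real.sign_zero]; grind
  · rw [Real.sign_of_pos hu]; grind [abs_of_neg, abs_of_pos, abs_of_nonneg]

theorem forall_le_mul_abs_sub_mul_iff {lam a g : ℝ} :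
    (∀ t, lam * |a| - g * a ≤ lam * |t| - g * t) ↔ g * a = lam * |a| ∧ |g| ≤ lam := by
  constructor
  · intro h
    have h0 := h 0
    have h2a := h (2 * a)
    have h1 := h 1
    have hm1 := h (-1)
    simp only [abs_zero, mul_zero, sub_zero, abs_mul, abs_two, abs_one, abs_neg, mul_one]
      at h0 h2a h1 hm1
    exact ⟨by linarith, abs_le.mpr ⟨by linarith, by linarith⟩⟩
  · rintro ⟨hga, hg⟩ t
    have : g * t ≤ lam * |t| := calc
      g * t ≤ |g| * |t| := abs_mul g t ▸ le_abs_self _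
      _ ≤ lam * |t| := by gcongr
    linarith

theorem forall_sum_le_sum_iff {ι α M : Type*} [Fintype ι] [DecidableEq ι] [AddCommMonoid M]
    [PartialOrder M] [IsOrderedCancelAddMonoid M] (φ : ι → α → M) (a : ι → α) :
    (∀ x : ι → α, ∑ i, φ i (a i) ≤ ∑ i, φ i (x i)) ↔ ∀ i t, φ i (a i) ≤ φ i t := by
  refine ⟨fun h i t => ?_, fun h x => sum_le_sum fun i _ => h i (x i)⟩
  have hupdate : ∑ j, φ j (Function.update a i t j) = φ i t + ∑ j ∈ {i}ᶜ, φ j (a j) := by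
    rw [Fintype.sum_eq_add_sum_compl i, Function.update_self]
    congr 1
    exact sum_congr rfl fun j hj => by rw [Function.update_of_ne (by simpa using hj)]
  have := h (Function.update a i t)
  rw [hupdate, Fintype.sum_eq_add_sum_compl i] at this
  exact le_of_add_le_add_right this

theorem ConvexOn.le_of_forall_le_add_sq_mul {E : Type*} [AddCommGroup E] [Module ℝ E]
    {φ : E → ℝ} (hφ : ConvexOn ℝ Set.univ φ) {a x : E} {c : ℝ}
    (h : ∀ s ∈ Set.Ioc (0 : ℝ) 1, φ a ≤ φ ((1 - s) • a + s • x) + s ^ 2 * c) : φ a ≤ φ x := by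
  have hlim : Tendsto (fun s : ℝ => φ x + s * c) (𝓝[>] 0) (𝓝 (φ x)) := by
    have : Continuous (fun s : ℝ => φ x + s * c) := by fun_prop
    simpa using (this.tendsto 0).mono_left nhdsWithin_le_nhds
  refine ge_of_tendsto hlim ?_
  filter_upwards [Ioc_mem_nhdsGT zero_lt_one] with s hs
  have hconv := hφ.2 (Set.mem_univ a) (Set.mem_univ x) (sub_nonneg.2 hs.2) hs.1.le
    (sub_add_cancel 1 s)
  simp only [smul_eq_mul] at hconv
  have : s * φ a ≤ s * (φ x + s * c) := by linarith [h s hs]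
  exact le_of_mul_le_mul_left this hs.1

theorem norm2_sq {n : ℕ} (v : Fin n → ℝ) : norm2 v ^ 2 = v ⬝ᵥ v := by
  rw [norm2, Real.sq_sqrt (sum_nonneg fun i _ => sq_nonneg _)]
  simp only [dotProduct, sq]

theorem convexOn_normOne {n : ℕ} : ConvexOn ℝ Set.univ (normOne : (Fin n → ℝ) → ℝ) := by
  refine ⟨convex_univ, fun x _ z _ a b ha hb _ => ?_⟩
  simp only [normOne, smul_eq_mul, mul_sum, ← sum_add_distrib]
  refine sum_le_sum fun i _ => (abs_add_le _ _).trans_eq ?_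
  simp [abs_mul, abs_of_nonneg ha, abs_of_nonneg hb]

noncomputable def penalizedLinear {p : ℕ} (lam : ℝ) (g x : Fin p → ℝ) : ℝ :=
  lam * normOne x - g ⬝ᵥ x

theorem convexOn_penalizedLinear {p : ℕ} {lam : ℝ} (hlam : 0 ≤ lam) (g : Fin p → ℝ) :
    ConvexOn ℝ Set.univ (penalizedLinear lam g) :=
  (convexOn_normOne.smul hlam).sub ((dotProductBilin ℝ ℝ g).concaveOn convex_univ)

theorem penalizedLinear_eq_sum {p : ℕ} (lam : ℝ) (g x : Fin p → ℝ) :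
    penalizedLinear lam g x = ∑ i, (lam * |x i| - g i * x i) := by
  simp only [penalizedLinear, normOne, dotProduct, mul_sum, sum_sub_distrib]

theorem Fl_eq_Fl_add {m p : ℕ} (K : Matrix (Fin m) (Fin p) ℝ) (y : Fin m → ℝ) (lam : ℝ)
    (xbar x : Fin p → ℝ) :
    Fl K y lam x = Fl K y lam xbar + K *ᵥ (x - xbar) ⬝ᵥ K *ᵥ (x - xbar)
      + 2 * (penalizedLinear lam (Kᵀ *ᵥ (y - K *ᵥ xbar)) x
        - penalizedLinear lam (Kᵀ *ᵥ (y - K *ᵥ xbar)) xbar) := by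
  have hres : K *ᵥ x - y = (K *ᵥ xbar - y) + K *ᵥ (x - xbar) := by
    rw [mulVec_sub]; abel
  have hcross : (K *ᵥ xbar - y) ⬝ᵥ K *ᵥ (x - xbar)
      = -((Kᵀ *ᵥ (y - K *ᵥ xbar)) ⬝ᵥ (x - xbar)) := by
    rw [dotProduct_mulVec, ← mulVec_transpose, ← neg_sub y, mulVec_neg, neg_dotProduct]
  rw [Fl, Fl, norm2_sq, norm2_sq, hres, add_dotProduct, dotProduct_add, dotProduct_add,
    dotProduct_comm (K *ᵥ (x - xbar)) (K *ᵥ xbar - y), hcross]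
  simp only [penalizedLinear, dotProduct_sub]
  ring

theorem forall_Fl_le_iff {m p : ℕ} (K : Matrix (Fin m) (Fin p) ℝ) (y : Fin m → ℝ) {lam : ℝ}
    (hlam : 0 ≤ lam) (xbar : Fin p → ℝ) :
    (∀ x, Fl K y lam xbar ≤ Fl K y lam x) ↔
      ∀ x, penalizedLinear lam (Kᵀ *ᵥ (y - K *ᵥ xbar)) xbar
        ≤ penalizedLinear lam (Kᵀ *ᵥ (y - K *ᵥ xbar)) x := by
  refine ⟨fun hmin x => ?_, fun hψ x => ?_⟩
  · refine (convexOn_penalizedLinear hlam _).le_of_forall_le_add_sq_mul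
      (c := K *ᵥ (x - xbar) ⬝ᵥ K *ᵥ (x - xbar) / 2) fun s _ => ?_
    have hexp := Fl_eq_Fl_add K y lam xbar ((1 - s) • xbar + s • x)
    rw [show (1 - s) • xbar + s • x - xbar = s • (x - xbar) by module, mulVec_smul,
      smul_dotProduct, dotProduct_smul, smul_eq_mul, smul_eq_mul] at hexp
    linarith [hmin ((1 - s) • xbar + s • x)]
  · have hquad : 0 ≤ K *ᵥ (x - xbar) ⬝ᵥ K *ᵥ (x - xbar) :=
      Fintype.sum_nonneg fun _ => mul_self_nonneg _
    linarith [Fl_eq_Fl_add K y lam xbar x, hψ x]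

theorem minimizer_iff_fixed_point {m p : ℕ} (K : Matrix (Fin m) (Fin p) ℝ)
    (y : Fin m → ℝ) (lam : ℝ) (hlam : 0 ≤ lam) (xbar : Fin p → ℝ) :
    (∀ x : Fin p → ℝ, Fl K y lam xbar ≤ Fl K y lam x) ↔
      xbar = softV lam (xbar + K.transpose.mulVec (y - K.mulVec xbar)) := by
  set g := Kᵀ *ᵥ (y - K *ᵥ xbar)
  rw [forall_Fl_le_iff K y hlam xbar]
  simp only [penalizedLinear_eq_sum]
  rw [forall_sum_le_sum_iff (fun i t => lam * |t| - g i * t), funext_iff]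
  simp only [forall_le_mul_abs_sub_mul_iff, softV, Pi.add_apply, eq_softS_add_iff hlam]
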